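/- Let z = (−1 + i√(d²−1))/d and Q⁺ = (𝟙 + zS)/2, Q⁻ = (Q⁺)† = (𝟙 + z̄S)/2, where S is the swap on ℂ^d ⊗ ℂ^d. Then |z| = 1, and defining I±(ρ) := (2d/(d²−1)) Q±(𝟙⊗ρ)Q∓, the identity ((𝟙⊗ρ)S − S(𝟙⊗ρ))/(2i) = (√(d²−1)/2)·(I₊(ρ) − I₋(ρ)) holds for every matrix ρ on ℂ^d. -/

import Mathlib

/-!
In `Q₊ A Q₋ - Q₋ A Q₊` the terms `A` and `|z|² S A S` cancel, leaving `(z - z̄)/4 · (S A - A S)`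
without any use of `S² = 𝟙`. Since `z - z̄ = 2i√(d²-1)/d`, the prefactor of `I₊ - I₋` is
`i√(d²-1)/(d²-1)`, and multiplying by `√(d²-1)/2` gives `i/2`, which is the prefactor of the left side.
-/

open Matrix Kronecker Complex
open scoped ComplexOrder

noncomputable section

def swap (d : ℕ) : Matrix (Fin d × Fin d) (Fin d × Fin d) ℂ :=
  Matrix.of fun p q => if p.1 = q.2 ∧ p.2 = q.1 then 1 else 0

def zPhase (d : ℕ) : ℂ := (-1 + Complex.I * (Real.sqrt ((d:ℝ)^2 - 1) : ℂ)) / (d : ℂ)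

def Qp (d : ℕ) : Matrix (Fin d × Fin d) (Fin d × Fin d) ℂ :=
  (2:ℂ)⁻¹ • (1 + zPhase d • swap d)

def Qm (d : ℕ) : Matrix (Fin d × Fin d) (Fin d × Fin d) ℂ :=
  (2:ℂ)⁻¹ • (1 + (starRingEnd ℂ) (zPhase d) • swap d)

def Ip (d : ℕ) (ρ : Matrix (Fin d) (Fin d) ℂ) : Matrix (Fin d × Fin d) (Fin d × Fin d) ℂ :=
  (2 * (d : ℂ) / ((d:ℂ)^2 - 1)) • (Qp d * ((1 : Matrix (Fin d) (Fin d) ℂ) ⊗ₖ ρ) * Qm d)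

def Im (d : ℕ) (ρ : Matrix (Fin d) (Fin d) ℂ) : Matrix (Fin d × Fin d) (Fin d × Fin d) ℂ :=
  (2 * (d : ℂ) / ((d:ℂ)^2 - 1)) • (Qm d * ((1 : Matrix (Fin d) (Fin d) ℂ) ⊗ₖ ρ) * Qp d)

theorem one_add_smul_mul_mul_one_add_smul_sub {K R : Type*} [CommRing K] [Ring R] [Algebra K R]
    (w v : K) (s a : R) :
    (1 + w • s) * a * (1 + v • s) - (1 + v • s) * a * (1 + w • s) = (w - v) • (s * a - a * s) := by
  simp only [add_mul, mul_add, one_mul, mul_one, smul_mul_assoc, mul_smul_comm, mul_assoc]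
  module

theorem swap_conjTranspose (d : ℕ) : (swap d)ᴴ = swap d := by
  ext p q
  simp only [conjTranspose_apply, _root_.swap, of_apply, apply_ite star, star_one, star_zero]
  exact if_congr ⟨fun h => ⟨h.2.symm, h.1.symm⟩, fun h => ⟨h.2.symm, h.1.symm⟩⟩ rfl rfl

theorem Qm_eq_conjTranspose_Qp (d : ℕ) : Qm d = (Qp d)ᴴ := by
  simp [Qm, Qp, conjTranspose_smul, swap_conjTranspose]

theorem zPhase_im (d : ℕ) : (zPhase d).im = √((d : ℝ) ^ 2 - 1) / d := by
  simp [zPhase]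

theorem norm_zPhase {d : ℕ} (hd : 1 ≤ d) : ‖zPhase d‖ = 1 := by
  have hd' : (1 : ℝ) ≤ d := by exact_mod_cast hd
  have hnum : ‖(-1 : ℂ) + I * (√((d : ℝ) ^ 2 - 1) : ℂ)‖ = d := by
    rw [mul_comm, ← ofReal_one, ← ofReal_neg, norm_add_mul_I, Real.sq_sqrt (by nlinarith)]
    simp
  rw [zPhase, norm_div, hnum, norm_natCast, div_self (by positivity)]

theorem ofReal_sqrt_sq_sub_one_sq {d : ℕ} (hd : 1 ≤ d) :
    (√((d : ℝ) ^ 2 - 1) : ℂ) ^ 2 = (d : ℂ) ^ 2 - 1 := by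
  have hd' : (1 : ℝ) ≤ d := by exact_mod_cast hd
  rw [← ofReal_pow, Real.sq_sqrt (by nlinarith)]
  push_cast
  ring

theorem Qp_mul_mul_Qm_sub_Qm_mul_mul_Qp (d : ℕ) (A : Matrix (Fin d × Fin d) (Fin d × Fin d) ℂ) :
    Qp d * A * Qm d - Qm d * A * Qp d
      = (4⁻¹ * (zPhase d - starRingEnd ℂ (zPhase d))) • (swap d * A - A * swap d) := by
  simp only [Qp, Qm, smul_mul_assoc, mul_smul_comm, smul_smul, ← smul_sub,
    one_add_smul_mul_mul_one_add_smul_sub]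
  norm_num

theorem Ip_sub_Im {d : ℕ} (hd : d ≠ 0) (ρ : Matrix (Fin d) (Fin d) ℂ) :
    Ip d ρ - Im d ρ = (I * √((d : ℝ) ^ 2 - 1) / ((d : ℂ) ^ 2 - 1)) •
      (swap d * ((1 : Matrix (Fin d) (Fin d) ℂ) ⊗ₖ ρ) - ((1 : Matrix (Fin d) (Fin d) ℂ) ⊗ₖ ρ) * swap d) := by
  rw [Ip, Im, ← smul_sub, Qp_mul_mul_Qm_sub_Qm_mul_mul_Qp, smul_smul, sub_conj, zPhase_im]
  congr 1
  push_cast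
  field_simp
  ring

theorem imaginary_part_statistical_decomposition {d : ℕ} (hd : 2 ≤ d) :
    Qm d = (Qp d)ᴴ ∧
    ‖zPhase d‖ = 1 ∧
    ∀ ρ : Matrix (Fin d) (Fin d) ℂ,
      ((2 * Complex.I)⁻¹ : ℂ) • (((1 : Matrix (Fin d) (Fin d) ℂ) ⊗ₖ ρ) * swap d
          - swap d * ((1 : Matrix (Fin d) (Fin d) ℂ) ⊗ₖ ρ))
        = ((Real.sqrt ((d:ℝ)^2 - 1) : ℂ) / 2) • (Ip d ρ - Im d ρ) := by
  refine ⟨Qm_eq_conjTranspose_Qp d, norm_zPhase (by omega), fun ρ => ?_⟩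
  have hs := ofReal_sqrt_sq_sub_one_sq (d := d) (by omega)
  have hne : (d : ℂ) ^ 2 - 1 ≠ 0 := by
    rw [sub_ne_zero]
    exact_mod_cast (Nat.one_lt_pow two_ne_zero (by omega : 1 < d)).ne'
  rw [Ip_sub_Im (by omega), smul_smul, ← neg_sub, smul_neg, ← neg_smul]
  congr 1
  field_simp
  rw [hs, I_sq]
  ring
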